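/- arXiv:2407.09710 — 3 statements merged into one kernel-verified Lean document; each statement's English description precedes it below -/
import Mathlib

section
/- Fix n ≥ 1. Starting from the n-qubit basis state |0…0⟩ (the indicator function of the constant-false assignment in (Fin n → Bool) → ℂ), apply the Hadamard gate to qubit 0 and then, successively for i = 0, 1, …, n−2 in increasing order, the CNOT gate with control qubit i and target qubit i+1. The resulting state is the GHZ state: the function taking value 1/Real.sqrt 2 on the constant-false assignment and on the constant-true assignment, and 0 on every other assignment. -/
/-- An `n`-qubit state. -/
def QState (n : ℕ) := (Fin n → Bool) → ℂ

/-- The Hadamard gate on qubit `j`. -/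
noncomputable def hadGate {n : ℕ} (j : Fin n) (ψ : QState n) : QState n :=
  fun d => ((1 : ℂ)/Real.sqrt 2) *
    (ψ (Function.update d j false) +
      (if d j then -1 else 1) * ψ (Function.update d j true))

/-- The CNOT gate with control qubit `i` and target qubit `j`. -/
def cnotGate {n : ℕ} (i j : Fin n) (ψ : QState n) : QState n :=
  fun d => ψ (Function.update d j (xor (d i) (d j)))

/-- The GHZ circuit: starting from `|0…0⟩`, apply `H` to qubit 0 and then
CNOT gates with control `i` and target `i+1` for `i = 0, …, n-2` in increasing order. -/
noncomputable def ghzCircuit (n : ℕ) (hn : 1 ≤ n) : QState n :=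
  ((List.range (n - 1)).attach).foldl
    (fun ψ i =>
      cnotGate ⟨i.1, by have := List.mem_range.mp i.2; omega⟩
               ⟨i.1 + 1, by have := List.mem_range.mp i.2; omega⟩ ψ)
    (hadGate ⟨0, hn⟩ (fun d => if d = (fun _ => false) then 1 else 0))

-- general attach-foldl lemma
lemma foldl_attach_eq {α β : Type*} (l : List α) (f : β → {x // x ∈ l} → β)
    (g : β → α → β) (H : ∀ b x, f b x = g b x.1) (b : β) :
    l.attach.foldl f b = l.foldl g b := by
  conv_rhs => rw [← List.attach_map_subtype_val l]
  rw [List.foldl_map]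
  congr 1
  funext b x
  exact H b x

noncomputable def ghzStep (n : ℕ) (ψ : QState n) (i : ℕ) : QState n :=
  if h : i + 1 < n then cnotGate ⟨i, by omega⟩ ⟨i + 1, h⟩ ψ else ψ

noncomputable def S (n : ℕ) (hn : 1 ≤ n) (k : ℕ) : QState n :=
  fun d => if ∀ j : Fin n, d j = if j.1 ≤ k then d ⟨0, hn⟩ else false
    then ((1 : ℂ)/Real.sqrt 2) else 0

theorem ghz_circuit_correct (n : ℕ) (hn : 1 ≤ n) :
    ghzCircuit n hn = fun d : Fin n → Bool =>
      if d = (fun _ => false) ∨ d = (fun _ => true)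
      then ((1 : ℂ)/Real.sqrt 2) else 0 := by
  have hstep0 : ghzCircuit n hn = (List.range (n-1)).foldl (ghzStep n) (S n hn 0) := by
    unfold ghzCircuit
    rw [foldl_attach_eq _ _ (ghzStep n)]
    · congr 1
      funext d
      have h0 : d ⟨0, hn⟩ = d ⟨0, hn⟩ := rfl
      unfold hadGate S
      beta_reduce
      by_cases h : ∀ j : Fin n, d j = if j.1 ≤ 0 then d ⟨0, hn⟩ else false
      · rw [if_pos h]
        have h1 : Function.update d ⟨0, hn⟩ false = (fun _ => false) := by
          funext j
          rcases eq_or_ne j ⟨0, hn⟩ with rfl | hj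
          · simp
          · rw [Function.update_of_ne hj]
            have := h j
            rwa [if_neg (by simp [Fin.ext_iff] at hj; omega)] at this
        have h2 : Function.update d ⟨0, hn⟩ true ≠ (fun _ => false) := by
          intro heq
          have := congrFun heq ⟨0, hn⟩
          simp at this
        rw [if_pos h1, if_neg h2]
        ring
      · rw [if_neg h]
        have h1 : Function.update d ⟨0, hn⟩ false ≠ (fun _ => false) := by
          intro heq
          apply h
          intro j
          rcases eq_or_ne j ⟨0, hn⟩ with rfl | hj
          · simp
          · have := congrFun heq j
            rw [Function.update_of_ne hj] at this
            rw [this, if_neg (by simp [Fin.ext_iff] at hj; omega)]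
        have h2 : Function.update d ⟨0, hn⟩ true ≠ (fun _ => false) := by
          intro heq
          have := congrFun heq ⟨0, hn⟩
          simp at this
        rw [if_neg h1, if_neg h2]
        ring
    · intro ψ x
      have hx := List.mem_range.mp x.2
      unfold ghzStep
      rw [dif_pos (by omega)]
  -- invariant
  have key : ∀ m, m ≤ n - 1 → (List.range m).foldl (ghzStep n) (S n hn 0) = S n hn m := by
    intro m hm
    induction m with
    | zero => simp
    | succ k ih =>
      rw [List.range_succ, List.foldl_append, ih (by omega)]
      simp only [List.foldl_cons, List.foldl_nil]
      unfold ghzStep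
      rw [dif_pos (by omega)]
      funext d
      unfold cnotGate S
      congr 1
      have hk1 : k + 1 < n := by omega
      have hne : (⟨0, hn⟩ : Fin n) ≠ ⟨k + 1, hk1⟩ := by simp [Fin.ext_iff]
      apply propext
      constructor
      · intro h'
        have hdk : ∀ j : Fin n, j.1 ≤ k → d j = d ⟨0, hn⟩ := by
          intro j hj
          have := h' j
          rw [Function.update_of_ne (by simp [Fin.ext_iff]; omega),
            Function.update_of_ne hne, if_pos hj] at this
          exact this
        have hxor := h' ⟨k + 1, hk1⟩
        rw [Function.update_self, if_neg (by simp)] at hxor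
        intro j
        rcases eq_or_ne j (⟨k + 1, hk1⟩ : Fin n) with rfl | hj
        · rw [if_pos (by simp)]
          have hk0 : d ⟨k, by omega⟩ = d ⟨0, hn⟩ := hdk _ (le_refl k)
          rw [← hdk ⟨k, by omega⟩ (le_refl k)]
          cases hc : d ⟨k, by omega⟩ <;> cases hc2 : d ⟨k + 1, hk1⟩ <;>
            simp_all
        · by_cases hle : j.1 ≤ k + 1
          · rw [if_pos hle]
            exact hdk j (by simp [Fin.ext_iff] at hj; omega)
          · rw [if_neg hle]
            have := h' j
            rw [Function.update_of_ne hj, Function.update_of_ne hne,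
              if_neg (by omega)] at this
            exact this
      · intro h j
        have h0 : d ⟨0, hn⟩ = d ⟨0, hn⟩ := rfl
        rw [Function.update_of_ne hne]
        rcases eq_or_ne j (⟨k + 1, hk1⟩ : Fin n) with rfl | hj
        · rw [Function.update_self, if_neg (by simp)]
          have h1 := h ⟨k, by omega⟩
          rw [if_pos (by simp)] at h1
          have h2 := h ⟨k + 1, hk1⟩
          rw [if_pos (by simp)] at h2
          rw [h1, h2]
          cases d ⟨0, hn⟩ <;> simp
        · rw [Function.update_of_ne hj]
          by_cases hle : j.1 ≤ k
          · rw [if_pos hle]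
            have := h j
            rwa [if_pos (by omega)] at this
          · rw [if_neg hle]
            have := h j
            rwa [if_neg (by simp [Fin.ext_iff] at hj; omega)] at this
  rw [hstep0, key (n-1) le_rfl]
  funext d
  unfold S
  congr 1
  apply propext
  constructor
  · intro h
    have hall : ∀ j : Fin n, d j = d ⟨0, hn⟩ := by
      intro j
      have := h j
      rwa [if_pos (by omega)] at this
    cases hc : d ⟨0, hn⟩
    · left; funext j; rw [hall j, hc]
    · right; funext j; rw [hall j, hc]
  · rintro (rfl | rfl) j <;>
    · have hj : (j : ℕ) ≤ n - 1 := by have := j.2; omega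
      simp [hj]
end

section
/- Let z₀ z₁ : ℂ with ‖z₀‖^2 + ‖z₁‖^2 = 1, and define ψ : Bool → ℂ by ψ b = if b then z₁ else z₀. Define the 4-qubit state Ψ : Bool × Bool × Bool × Bool → ℂ by Ψ (b₀, b₁, b₂, b₃) = (if b₁ = b₀ then ψ b₀ else 0) * (if b₂ = b₃ then 1/Real.sqrt 2 else 0), i.e. the entangled state z₀|00⟩ + z₁|11⟩ on qubits 0,1 tensored with a Bell pair on qubits 2,3. Let Φ be obtained from Ψ by applying the CNOT gate with control qubit 1 and target qubit 2 (sending v to (b₀,b₁,b₂,b₃) ↦ v (b₀, b₁, xor b₁ b₂, b₃)) and then the Hadamard gate on qubit 1 (sending v to (b₀,b₁,b₂,b₃) ↦ (1/Real.sqrt 2) * (v (b₀, false, b₂, b₃) + (if b₁ then -1 else 1) * v (b₀, true, b₂, b₃))). Then for every u w : Bool: (a) the probability of measuring qubits 1 and 2 and obtaining outcomes u and w, namely ∑_{b₀ b₃ : Bool} ‖Φ (b₀, u, w, b₃)‖^2, equals 1/4; and (b) letting χ (b₀, b₃) = 2 * Φ (b₀, u, w, b₃) be the renormalized post-measurement state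 on qubits 0 and 3, applying to qubit 3 first the Z gate if u = true (multiplying by -1 when b₃ = true) and then the X gate if w = true (replacing b₃ by !b₃) yields exactly the state (b₀, b₃) ↦ (if u && w then -1 else 1) * (if b₃ = b₀ then ψ b₀ else 0). Hence, up to the global sign (−1)^{u∧w}, quantum teleportation transfers the entanglement originally between qubits 0 and 1 to qubits 0 and 3. -/
/-!
After the CNOT and the Hadamard gate, only the basis vectors with `b₁ = b₀` and `b₃ = b₀ xor b₂`
carry amplitude, and that amplitude is `± ψ b₀ / 2`, the sign being `(-1)^(b₁ ∧ b₀)`. So each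
measurement outcome has probability `(‖z₀‖² + ‖z₁‖²) / 4`, the post-measurement state of qubits
0 and 3 is `ψ` copied diagonally up to a flip of qubit 3 by `b₂` and a phase, and the conditional
X and Z gates undo the flip and turn the phase into the global sign `(-1)^(b₁ ∧ b₂)`.
-/

namespace Teleportation

noncomputable section

def boolSign (b : Bool) : ℂ := if b then -1 else 1

@[simp]
theorem boolSign_false : boolSign false = 1 := rfl

@[simp]
theorem boolSign_true : boolSign true = -1 := rfl

theorem boolSign_mul_boolSign (a b : Bool) : boolSign a * boolSign b = boolSign (xor a b) := by
  cases a <;> cases b <;> simp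

@[simp]
theorem norm_boolSign (b : Bool) : ‖boolSign b‖ = 1 := by
  cases b <;> simp

/-- The state `∑ b, ψ b |b b⟩`. -/
def diagState (ψ : Bool → ℂ) (p : Bool × Bool) : ℂ := if p.2 = p.1 then ψ p.1 else 0

def bellPair (p : Bool × Bool) : ℂ := if p.1 = p.2 then 1 / (Real.sqrt 2 : ℂ) else 0

def diagStateBell (ψ : Bool → ℂ) (p : Bool × Bool × Bool × Bool) : ℂ :=
  diagState ψ (p.1, p.2.1) * bellPair p.2.2

def cnot12 (v : Bool × Bool × Bool × Bool → ℂ) (p : Bool × Bool × Bool × Bool) : ℂ :=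
  v (p.1, p.2.1, xor p.2.1 p.2.2.1, p.2.2.2)

def hadamard1 (v : Bool × Bool × Bool × Bool → ℂ) (p : Bool × Bool × Bool × Bool) : ℂ :=
  1 / (Real.sqrt 2 : ℂ) *
    (v (p.1, false, p.2.2.1, p.2.2.2) + boolSign p.2.1 * v (p.1, true, p.2.2.1, p.2.2.2))

def zGateIf (u : Bool) (χ : Bool × Bool → ℂ) (q : Bool × Bool) : ℂ := boolSign (u && q.2) * χ q

def xGateIf (w : Bool) (χ : Bool × Bool → ℂ) (p : Bool × Bool) : ℂ := χ (p.1, xor p.2 w)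

theorem one_div_sqrt_two_mul_self : 1 / (Real.sqrt 2 : ℂ) * (1 / (Real.sqrt 2 : ℂ)) = 1 / 2 := by
  rw [div_mul_div_comm, one_mul, ← Complex.ofReal_mul, Real.mul_self_sqrt zero_le_two]
  norm_num

theorem hadamard1_cnot12_diagStateBell_apply (ψ : Bool → ℂ) (b₀ u w b₃ : Bool) :
    hadamard1 (cnot12 (diagStateBell ψ)) (b₀, u, w, b₃) =
      boolSign (u && b₀) * diagState ψ (b₀, xor b₃ w) / 2 := by
  have only_b₁_eq_b₀ : hadamard1 (cnot12 (diagStateBell ψ)) (b₀, u, w, b₃) =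
      1 / (Real.sqrt 2 : ℂ) * (boolSign (u && b₀) * ψ b₀ * bellPair (xor b₀ w, b₃)) := by
    cases b₀ <;> simp [hadamard1, cnot12, diagStateBell, diagState, mul_assoc]
  have bellPair_eq :
      bellPair (xor b₀ w, b₃) = if xor b₃ w = b₀ then 1 / (Real.sqrt 2 : ℂ) else 0 := by
    cases b₀ <;> cases w <;> cases b₃ <;> simp [bellPair]
  rw [only_b₁_eq_b₀, bellPair_eq, diagState]
  split_ifs
  · linear_combination (boolSign (u && b₀) * ψ b₀) * one_div_sqrt_two_mul_self
  · simp

theorem sum_norm_sq_diagState_xor (ψ : Bool → ℂ) (b₀ w : Bool) :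
    ∑ b₃ : Bool, ‖diagState ψ (b₀, xor b₃ w)‖ ^ 2 = ‖ψ b₀‖ ^ 2 := by
  cases b₀ <;> cases w <;> simp [diagState]

theorem xGateIf_zGateIf_signed_diagState (ψ : Bool → ℂ) (u w : Bool) :
    xGateIf w (zGateIf u fun p => boolSign (u && p.1) * diagState ψ (p.1, xor p.2 w)) =
      fun p => boolSign (u && w) * diagState ψ p := by
  funext ⟨b₀, b₃⟩
  simp only [xGateIf, zGateIf, Bool.xor_assoc, Bool.xor_self, Bool.xor_false]
  by_cases h : b₃ = b₀
  · subst h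
    rw [← mul_assoc, boolSign_mul_boolSign]
    congr 2
    cases u <;> cases w <;> cases b₃ <;> rfl
  · simp [diagState, h]

end

end Teleportation

open Teleportation in
theorem teleportation_preserves_entanglement
    (z₀ z₁ : ℂ) (hnorm : ‖z₀‖^2 + ‖z₁‖^2 = 1)
    (ψ : Bool → ℂ) (hψ : ψ = fun b => if b then z₁ else z₀)
    (Ψ : Bool × Bool × Bool × Bool → ℂ)
    (hΨ : Ψ = fun p => (if p.2.1 = p.1 then ψ p.1 else 0) *
      (if p.2.2.1 = p.2.2.2 then (1 : ℂ)/Real.sqrt 2 else 0))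
    (Ψ' : Bool × Bool × Bool × Bool → ℂ)
    (hΨ' : Ψ' = fun p => Ψ (p.1, p.2.1, xor p.2.1 p.2.2.1, p.2.2.2))
    (Φ : Bool × Bool × Bool × Bool → ℂ)
    (hΦ : Φ = fun p => ((1 : ℂ)/Real.sqrt 2) *
      (Ψ' (p.1, false, p.2.2.1, p.2.2.2) +
        (if p.2.1 then -1 else 1) * Ψ' (p.1, true, p.2.2.1, p.2.2.2))) :
    ∀ u w : Bool,
      (∑ b₀ : Bool, ∑ b₃ : Bool, ‖Φ (b₀, u, w, b₃)‖^2 = 1/4) ∧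
      (∀ χ : Bool × Bool → ℂ, χ = (fun p => 2 * Φ (p.1, u, w, p.2)) →
        (fun p : Bool × Bool =>
            (fun q : Bool × Bool => (if u && q.2 then (-1 : ℂ) else 1) * χ q)
              (p.1, xor p.2 w)) =
          fun p : Bool × Bool =>
            (if u && w then (-1 : ℂ) else 1) * (if p.2 = p.1 then ψ p.1 else 0)) := by
  have hΦ_eq : Φ = hadamard1 (cnot12 (diagStateBell ψ)) := by
    subst hΦ hΨ' hΨ
    rfl
  have hΦ_apply := hadamard1_cnot12_diagStateBell_apply ψ
  rw [hΦ_eq]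
  intro u w
  constructor
  · calc ∑ b₀ : Bool, ∑ b₃ : Bool, ‖hadamard1 (cnot12 (diagStateBell ψ)) (b₀, u, w, b₃)‖ ^ 2
        = ∑ b₀ : Bool, ‖ψ b₀‖ ^ 2 / 4 := by
          simp only [hΦ_apply, norm_div, norm_mul, norm_boolSign, one_mul, div_pow,
            ← Finset.sum_div, sum_norm_sq_diagState_xor]
          norm_num
      _ = 1 / 4 := by simp [hψ, ← add_div, add_comm, hnorm]
  · rintro χ rfl
    have hχ :
        (fun p : Bool × Bool => 2 * hadamard1 (cnot12 (diagStateBell ψ)) (p.1, u, w, p.2)) =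
          fun p => boolSign (u && p.1) * diagState ψ (p.1, xor p.2 w) := by
      funext p
      rw [hΦ_apply]
      ring
    rw [hχ]
    exact xGateIf_zGateIf_signed_diagState ψ u w
end

section
/- Let N ≥ 2, n : ℕ, and let a : (ZMod N)ˣ be a unit. For j < n, the controlled modular multiplication gate acts on states ψ : Fin (2^n) × ZMod N → ℂ by (U_j ψ) (i, y) = ψ (i, if Nat.testBit i.val j then ((a⁻¹ : (ZMod N)ˣ) : ZMod N)^(2^j) * y else y), the amplitude-level action of the basis permutation (i, y) ↦ (i, if Nat.testBit i.val j then ((a : ZMod N))^(2^j) * y else y). Applying U_{n-1} ∘ ⋯ ∘ U_0 to the initial state (i, y) ↦ ((1 : ℂ)/Real.sqrt 2)^n * (if y = 1 then 1 else 0) — the uniform superposition on the first register together with the basis state |1⟩ on the second — yields the order-finding state (i, y) ↦ ((1 : ℂ)/Real.sqrt 2)^n * (if y = ((a : ZMod N))^(i.val) then 1 else 0), i.e. the state (1/√(2^n)) ∑_{i < 2^n} |i⟩ |a^i mod N⟩. -/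
/-- The amplitude-level action of the `j`-th controlled modular multiplication gate:
the basis permutation `(i, y) ↦ (i, if i.testBit j then a^(2^j) * y else y)` acts on a
state `ψ` by precomposition with its inverse. -/
noncomputable def Uact (N n : ℕ) (a : (ZMod N)ˣ) (j : ℕ)
    (ψ : Fin (2^n) × ZMod N → ℂ) : Fin (2^n) × ZMod N → ℂ :=
  fun p =>
    ψ (p.1, if Nat.testBit p.1.val j
            then ((a⁻¹ : (ZMod N)ˣ) : ZMod N)^(2^j) * p.2 else p.2)

lemma aux_mod_succ (i m : ℕ) :
    i % 2^(m+1) = (if Nat.testBit i m then 2^m else 0) + i % 2^m := by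
  have h1 : i % 2^(m+1) = i % 2^m + 2^m * (i / 2^m % 2) := by
    rw [pow_succ, Nat.mod_mul]
  rcases Nat.mod_two_eq_zero_or_one (i / 2^m) with h | h <;>
    simp [h1, Nat.testBit_eq_decide_div_mod_eq, h]
  · omega

lemma aux_fold (N n : ℕ) (a : (ZMod N)ˣ) (c : ℂ) (m : ℕ) :
    (List.range m).foldl (fun ψ j => Uact N n a j ψ)
        (fun p : Fin (2^n) × ZMod N => c * (if p.2 = 1 then 1 else 0)) =
      fun p : Fin (2^n) × ZMod N =>
        c * (if p.2 = ((a : ZMod N))^(p.1.val % 2^m) then 1 else 0) := by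
  induction m with
  | zero => simp [Nat.mod_one]
  | succ m ih =>
    rw [List.range_succ, List.foldl_append, List.foldl_cons, List.foldl_nil, ih]
    funext p
    obtain ⟨i, y⟩ := p
    simp only [Uact]
    congr 1
    rw [aux_mod_succ]
    by_cases hb : Nat.testBit i.val m
    · simp only [hb, if_true, pow_add]
      have key : (((a⁻¹ : (ZMod N)ˣ) : ZMod N))^(2^m) * y = (a : ZMod N)^(i.val % 2^m)
          ↔ y = (a : ZMod N)^(2^m) * (a : ZMod N)^(i.val % 2^m) := by
        rw [← Units.val_pow_eq_pow_val, inv_pow, Units.inv_mul_eq_iff_eq_mul,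
          Units.val_pow_eq_pow_val]
      simp only [key]
    · simp [hb]

theorem order_finding_state (N : ℕ) (hN : 2 ≤ N) (n : ℕ) (a : (ZMod N)ˣ) :
    (List.range n).foldl (fun ψ j => Uact N n a j ψ)
        (fun p : Fin (2^n) × ZMod N =>
          ((1 : ℂ)/Real.sqrt 2)^n * (if p.2 = 1 then 1 else 0)) =
      fun p : Fin (2^n) × ZMod N =>
        ((1 : ℂ)/Real.sqrt 2)^n *
          (if p.2 = ((a : ZMod N))^(p.1.val) then 1 else 0) := by
  rw [aux_fold]
  funext p
  rw [Nat.mod_eq_of_lt p.1.isLt]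
end
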